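/- Let g ≥ 3 be an integer and suppose positive integers a > b > c, digits d₁, d₃ ∈ {1,…,g−1} and integers n₁, n₃ ≥ 2 with n₁ ≤ n₃ satisfy ab+1 = d₃(g^{n₃}−1)/(g−1) and bc+1 = d₁(g^{n₁}−1)/(g−1). If the rational numbers d₃·g^{n₃}/(d₃+g−1) and d₁·g^{n₁}/(d₁+g−1) are multiplicatively independent, then b ≤ 4·(2g−2)^{5√(n₃)+1}. -/

import Mathlib

/-- Two non-zero rationals are multiplicatively independent if
`α^u * β^v = 1` (with integer exponents) forces `u = v = 0`. -/
def MultIndep (α β : ℚ) : Prop :=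
  ∀ u v : ℤ, α ^ u * β ^ v = 1 → u = 0 ∧ v = 0

/-!
Write `α = d₃ g^{n₃} / (d₃ + g - 1)` and `β = d₁ g^{n₁} / (d₁ + g - 1)`. The repdigit equations say
exactly that `d g^n ≡ d + g - 1 (mod b)` for both pairs, so numerator and denominator of `α` and of
`β` agree modulo `b`. By Dirichlet's approximation theorem, with `s = ⌊√n₃⌋` there are
`0 ≤ j ≤ k ≤ s`, `k > 0`, with `|j n₃ - k n₁| = Δ ≤ n₃ / (s + 1) ≤ s`. Clearing the powers of `g` in
`α^j` against those in `β^k` then gives two natural numbers at most `(2g - 2)^{j + k} g^Δ`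
which are congruent modulo `b`; they are distinct because `α^j ≠ β^k` by independence. Hence
`b ≤ (2g - 2)^{3s}`.
-/

theorem MultIndep.pow_ne_pow {α β : ℚ} (h : MultIndep α β) (hβ : β ≠ 0) {j k : ℕ} (hk : k ≠ 0) :
    α ^ j ≠ β ^ k := by
  intro hjk
  have hone : α ^ (j : ℤ) * β ^ (-(k : ℤ)) = 1 := by
    rw [zpow_neg, zpow_natCast, zpow_natCast, hjk, mul_inv_cancel₀ (pow_ne_zero _ hβ)]
  exact hk (by exact_mod_cast neg_eq_zero.mp (h _ _ hone).2)

theorem Nat.ModEq.le_of_ne {b x y M : ℕ} (h : x ≡ y [MOD b]) (hne : x ≠ y) (hx : x ≤ M)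
    (hy : y ≤ M) : b ≤ M := by
  by_contra! hM
  exact hne (h.eq_of_lt_of_lt (hx.trans_lt hM) (hy.trans_lt hM))

theorem Nat.mul_pow_modEq_of_repdigit {b d g m n : ℕ} (hg : 1 ≤ g) (hm : b ∣ m)
    (h : (m + 1) * (g - 1) = d * (g ^ n - 1)) : d * g ^ n ≡ d + g - 1 [MOD b] := by
  have hgn : 1 ≤ g ^ n := Nat.one_le_pow _ _ hg
  have hd : d ≤ d * g ^ n := Nat.le_mul_of_pos_right d hgn
  rw [Nat.mul_sub_one d, Nat.add_one_mul m] at h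
  refine ((Nat.modEq_iff_dvd' (by omega)).mpr ?_).symm
  rw [show d * g ^ n - (d + g - 1) = m * (g - 1) by omega]
  exact hm.mul_right _

theorem Nat.ModEq.pow_mul_pow_exchange {b d₁ d₃ e₁ e₃ g n₁ n₃ j k Δ : ℕ}
    (h₁ : d₁ * g ^ n₁ ≡ e₁ [MOD b]) (h₃ : d₃ * g ^ n₃ ≡ e₃ [MOD b]) (hΔ : j * n₃ = k * n₁ + Δ) :
    d₁ ^ k * e₃ ^ j ≡ d₃ ^ j * e₁ ^ k * g ^ Δ [MOD b] :=
  calc d₁ ^ k * e₃ ^ j ≡ d₁ ^ k * (d₃ * g ^ n₃) ^ j [MOD b] := (h₃.pow j).symm.mul_left _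
    _ = d₃ ^ j * (d₁ * g ^ n₁) ^ k * g ^ Δ := by
      rw [mul_pow, mul_pow, ← pow_mul, ← pow_mul, mul_comm n₃, hΔ, pow_add, mul_comm n₁]; ring
    _ ≡ d₃ ^ j * e₁ ^ k * g ^ Δ [MOD b] := ((h₁.pow k).mul_left _).mul_right _

theorem div_pow_eq_div_pow_of_mul_eq {K : Type*} [Field K] {d₁ d₃ e₁ e₃ g : K} {n₁ n₃ j k Δ : ℕ}
    (he₁ : e₁ ≠ 0) (he₃ : e₃ ≠ 0) (hΔ : j * n₃ = k * n₁ + Δ)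
    (h : d₁ ^ k * e₃ ^ j = d₃ ^ j * e₁ ^ k * g ^ Δ) :
    (d₃ * g ^ n₃ / e₃) ^ j = (d₁ * g ^ n₁ / e₁) ^ k := by
  rw [div_pow, div_pow, div_eq_div_iff (pow_ne_zero _ he₃) (pow_ne_zero _ he₁), mul_pow, mul_pow,
    ← pow_mul, ← pow_mul, mul_comm n₃, hΔ, pow_add, mul_comm n₁]
  linear_combination (-g ^ (k * n₁)) * h

theorem le_pow_mul_pow_of_exponent_gap {b d₁ d₃ e₁ e₃ g n₁ n₃ j k Δ M : ℕ} (hg : 0 < g)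
    (h₁ : d₁ * g ^ n₁ ≡ e₁ [MOD b]) (h₃ : d₃ * g ^ n₃ ≡ e₃ [MOD b]) (he₁ : e₁ ≠ 0) (he₃ : e₃ ≠ 0)
    (hd₁M : d₁ ≤ M) (hd₃M : d₃ ≤ M) (he₁M : e₁ ≤ M) (he₃M : e₃ ≤ M) (hΔ : j * n₃ = k * n₁ + Δ)
    (hne : ((d₃ : ℚ) * g ^ n₃ / e₃) ^ j ≠ ((d₁ : ℚ) * g ^ n₁ / e₁) ^ k) :
    b ≤ M ^ (j + k) * g ^ Δ := by
  have hgΔ : 1 ≤ g ^ Δ := Nat.one_le_pow _ _ hg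
  refine (h₁.pow_mul_pow_exchange h₃ hΔ).le_of_ne (fun h ↦ hne ?_) ?_ ?_
  · exact div_pow_eq_div_pow_of_mul_eq (by exact_mod_cast he₁) (by exact_mod_cast he₃) hΔ
      (by exact_mod_cast h)
  · calc d₁ ^ k * e₃ ^ j ≤ M ^ k * M ^ j := by gcongr
      _ = M ^ (j + k) * 1 := by ring
      _ ≤ M ^ (j + k) * g ^ Δ := by gcongr
  · calc d₃ ^ j * e₁ ^ k * g ^ Δ ≤ M ^ j * M ^ k * g ^ Δ := by gcongr
      _ = M ^ (j + k) * g ^ Δ := by ring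

theorem le_pow_of_exponent_gap {b g d₁ d₃ n₁ n₃ j k Δ : ℕ} (hg : 2 ≤ g) (hd₁ : 1 ≤ d₁)
    (hd₁' : d₁ ≤ g - 1) (hd₃' : d₃ ≤ g - 1)
    (h₁ : d₁ * g ^ n₁ ≡ d₁ + g - 1 [MOD b]) (h₃ : d₃ * g ^ n₃ ≡ d₃ + g - 1 [MOD b])
    (hind : MultIndep ((d₃ : ℚ) * g ^ n₃ / (d₃ + g - 1)) ((d₁ : ℚ) * g ^ n₁ / (d₁ + g - 1)))
    (hk : 0 < k) (hΔ : j * n₃ = k * n₁ + Δ ∨ k * n₁ = j * n₃ + Δ) :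
    b ≤ (2 * g - 2) ^ (j + k + Δ) := by
  have hcast (d : ℕ) : ((d + g - 1 : ℕ) : ℚ) = d + g - 1 := by
    rw [Nat.cast_sub (by omega)]; push_cast; ring
  have hgQ : (2 : ℚ) ≤ g := by exact_mod_cast hg
  have hβ : (d₁ : ℚ) * g ^ n₁ / (d₁ + g - 1) ≠ 0 :=
    div_ne_zero (mul_ne_zero (by positivity) (by positivity)) (by linarith)
  have hne := hind.pow_ne_pow hβ (j := j) hk.ne'
  suffices hb : b ≤ (2 * g - 2) ^ (j + k) * g ^ Δ by
    rw [pow_add _ (j + k) Δ]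
    exact hb.trans (Nat.mul_le_mul_left _ (Nat.pow_le_pow_left (by omega) Δ))
  rcases hΔ with hΔ | hΔ
  · refine le_pow_mul_pow_of_exponent_gap (by omega) h₁ h₃ (by omega) (by omega)
      (by omega) (by omega) (by omega) (by omega) hΔ ?_
    rwa [hcast, hcast]
  · rw [add_comm j]
    refine le_pow_mul_pow_of_exponent_gap (by omega) h₃ h₁ (by omega) (by omega)
      (by omega) (by omega) (by omega) (by omega) hΔ ?_
    rw [hcast, hcast]
    exact hne.symm

theorem Int.exists_abs_mul_sub_mul_le (p q : ℕ) {s : ℕ} (hq : 0 < q) (hs : 0 < s) :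
    ∃ j k : ℤ, 0 < k ∧ k ≤ s ∧ |k * p - j * q| * (s + 1) ≤ q := by
  obtain ⟨j, k, hk, hks, hjk⟩ := Real.exists_int_int_abs_mul_sub_le ((p : ℝ) / q) hs
  have hqR : (0 : ℝ) < q := by exact_mod_cast hq
  refine ⟨j, k, hk, hks, ?_⟩
  rw [le_div_iff₀ (by positivity)] at hjk
  have hR : |(k * p - j * q : ℤ)| * ((s : ℝ) + 1) ≤ q :=
    calc _ = |k * ((p : ℝ) / q) - j| * ((s : ℝ) + 1) * q := by
          push_cast
          rw [mul_right_comm, ← abs_of_pos hqR, ← abs_mul, abs_of_pos hqR]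
          field_simp
      _ ≤ 1 * q := by gcongr
      _ = q := one_mul _
  exact_mod_cast hR

theorem exists_exponent_gap_le {n₁ n₃ s : ℕ} (hs : 0 < s) (hn₃ : 0 < n₃) (hn₁₃ : n₁ ≤ n₃) :
    ∃ j k Δ : ℕ, 0 < k ∧ k ≤ s ∧ j ≤ k ∧ (s + 1) * Δ ≤ n₃ ∧
      (j * n₃ = k * n₁ + Δ ∨ k * n₁ = j * n₃ + Δ) := by
  obtain ⟨j, k, hk, hks, hgap⟩ := Int.exists_abs_mul_sub_mul_le n₁ n₃ hn₃ hs
  have hs1 : (1 : ℤ) ≤ s := by exact_mod_cast hs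
  have hsmall : |k * n₁ - j * n₃| < n₃ := by nlinarith [abs_nonneg (k * n₁ - j * n₃)]
  obtain ⟨hgap_lo, hgap_hi⟩ := abs_lt.mp hsmall
  have hn₁₃Z : (n₁ : ℤ) ≤ n₃ := by exact_mod_cast hn₁₃
  have hj : 0 ≤ j := by
    by_contra! hj
    nlinarith
  have hjk : j ≤ k := by
    by_contra! hjk
    nlinarith
  lift j to ℕ using hj
  lift k to ℕ using hk.le
  rcases le_total (j * n₃) (k * n₁) with h | h
  · refine ⟨j, k, k * n₁ - j * n₃, by omega, by omega, by omega, ?_, Or.inr (by omega)⟩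
    have hZ : ((j * n₃ : ℕ) : ℤ) ≤ (k * n₁ : ℕ) := by exact_mod_cast h
    push_cast at hZ
    rw [abs_of_nonneg (by linarith)] at hgap
    zify [h]
    linarith
  · refine ⟨j, k, j * n₃ - k * n₁, by omega, by omega, by omega, ?_, Or.inl (by omega)⟩
    have hZ : ((k * n₁ : ℕ) : ℤ) ≤ (j * n₃ : ℕ) := by exact_mod_cast h
    push_cast at hZ
    rw [abs_of_nonpos (by linarith)] at hgap
    zify [h]
    linarith

theorem stmt_12_general (g a b c d₁ d₃ n₁ n₃ : ℕ) (hg : 3 ≤ g)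
    (hd₁ : 1 ≤ d₁) (hd₁' : d₁ ≤ g - 1) (hd₃' : d₃ ≤ g - 1)
    (hn₃ : 2 ≤ n₃) (hn₁₃ : n₁ ≤ n₃)
    (hab : (a * b + 1) * (g - 1) = d₃ * (g ^ n₃ - 1))
    (hbc : (b * c + 1) * (g - 1) = d₁ * (g ^ n₁ - 1))
    (hind : MultIndep ((d₃ : ℚ) * g ^ n₃ / (d₃ + g - 1)) ((d₁ : ℚ) * g ^ n₁ / (d₁ + g - 1))) :
    (b : ℝ) ≤ 4 * (2 * (g : ℝ) - 2) ^ (5 * Real.sqrt n₃ + 1) := by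
  have h₃ := Nat.mul_pow_modEq_of_repdigit (by omega) (dvd_mul_left b a) hab
  have h₁ := Nat.mul_pow_modEq_of_repdigit (by omega) (dvd_mul_right b c) hbc
  set s := Nat.sqrt n₃
  obtain ⟨j, k, Δ, hk, hks, hjk, hΔs, hΔ⟩ :=
    exists_exponent_gap_le (s := s) (Nat.sqrt_pos.mpr (by omega)) (by omega) hn₁₃
  have hΔ_le : Δ ≤ s := by
    have : n₃ < (s + 1) ^ 2 := Nat.lt_succ_sqrt' n₃
    nlinarith
  have hb : b ≤ (2 * g - 2) ^ (3 * s) :=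
    (le_pow_of_exponent_gap (by omega) hd₁ hd₁' hd₃' h₁ h₃ hind hk hΔ).trans
      (Nat.pow_le_pow_right (by omega) (by omega))
  have hbase : (1 : ℝ) ≤ 2 * g - 2 := by
    have : (3 : ℝ) ≤ g := by exact_mod_cast hg
    linarith
  have hexp : ((3 * s : ℕ) : ℝ) ≤ 5 * Real.sqrt n₃ + 1 := by
    have := Real.nat_sqrt_le_real_sqrt (a := n₃)
    push_cast
    linarith [Real.sqrt_nonneg n₃]
  calc (b : ℝ) ≤ (2 * g - 2) ^ (3 * s) := by
        have : (((2 * g - 2) ^ (3 * s) : ℕ) : ℝ) = (2 * g - 2) ^ (3 * s) := by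
          rw [Nat.cast_pow, Nat.cast_sub (by omega)]; push_cast; ring
        rw [← this]; exact_mod_cast hb
    _ = (2 * g - 2) ^ ((3 * s : ℕ) : ℝ) := (Real.rpow_natCast _ _).symm
    _ ≤ (2 * g - 2) ^ (5 * Real.sqrt n₃ + 1) := Real.rpow_le_rpow_of_exponent_le hbase hexp
    _ ≤ 4 * (2 * g - 2) ^ (5 * Real.sqrt n₃ + 1) :=
        le_mul_of_one_le_left (Real.rpow_nonneg (by linarith) _) (by norm_num)

theorem stmt_12 (g a b c d₁ d₃ n₁ n₃ : ℕ) (hg : 3 ≤ g)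
    (hc : 0 < c) (hcb : c < b) (hba : b < a)
    (hd₁ : 1 ≤ d₁) (hd₁' : d₁ ≤ g - 1) (hd₃ : 1 ≤ d₃) (hd₃' : d₃ ≤ g - 1)
    (hn₁ : 2 ≤ n₁) (hn₃ : 2 ≤ n₃) (hn₁₃ : n₁ ≤ n₃)
    (hab : (a * b + 1) * (g - 1) = d₃ * (g ^ n₃ - 1))
    (hbc : (b * c + 1) * (g - 1) = d₁ * (g ^ n₁ - 1))
    (hind : MultIndep ((d₃ : ℚ) * g ^ n₃ / (d₃ + g - 1)) ((d₁ : ℚ) * g ^ n₁ / (d₁ + g - 1))) :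
    (b : ℝ) ≤ 4 * (2 * (g : ℝ) - 2) ^ (5 * Real.sqrt n₃ + 1) :=
  stmt_12_general g a b c d₁ d₃ n₁ n₃ hg hd₁ hd₁' hd₃' hn₃ hn₁₃ hab hbc hind
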